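/- arXiv:1711.04751 — 3 statements merged into one kernel-verified Lean document; each statement's English description precedes it below -/
import Mathlib

section
/- For a fixed nonnegative integer k and any θ ∈ [0, π/2], the sum ∑_{j=0}^{k} C(k,j)² Γ(k−j+1) Γ(j+3/2) cos^{2j}θ sin^{2k−2j}θ ≤ Γ(k+3/2), with equality when θ = 0. -/
/-!
Since `n ↦ Γ(x + n) / Γ(x)` is the rising factorial `x (x + 1) ⋯ (x + n - 1)`, it is monotone in
`x > 0`. Comparing `x = j + 1` with `x = j + 3/2` gives `C(k,j) Γ(k-j+1) Γ(j+3/2) ≤ Γ(k+3/2)`, so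
each summand is at most `Γ(k+3/2) C(k,j) cos²ʲθ sin²⁽ᵏ⁻ʲ⁾θ`, and these sum to
`Γ(k+3/2) (cos²θ + sin²θ)ᵏ = Γ(k+3/2)`. At `θ = 0` only the term `j = k` survives.
-/

open Real Finset
open scoped Nat

lemma Real.Gamma_add_nat_mul_Gamma_le (n : ℕ) {x y : ℝ} (hx : 0 < x) (hxy : x ≤ y) :
    Gamma (x + n) * Gamma y ≤ Gamma (y + n) * Gamma x := by
  induction n with
  | zero => simp [mul_comm]
  | succ n ih =>
    have hy : 0 < y := hx.trans_le hxy
    push_cast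
    rw [← add_assoc, ← add_assoc, Gamma_add_one (by positivity : x + n ≠ 0),
      Gamma_add_one (by positivity : y + n ≠ 0), mul_assoc, mul_assoc]
    exact mul_le_mul (by linarith) ih (by positivity) (by positivity)

lemma Real.choose_mul_Gamma_mul_Gamma_le {k j : ℕ} (hj : j ≤ k) {a : ℝ} (ha : 1 ≤ a) :
    (k.choose j : ℝ) * Gamma ((k : ℝ) - j + 1) * Gamma ((j : ℝ) + a) ≤ Gamma ((k : ℝ) + a) := by
  have hmono := Gamma_add_nat_mul_Gamma_le (k - j) (x := (j : ℝ) + 1) (y := (j : ℝ) + a)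
    (by positivity) (by linarith)
  have hkj : ((k - j : ℕ) : ℝ) = (k : ℝ) - j := Nat.cast_sub hj
  have hfac : (k.choose j : ℝ) * (k - j)! * j ! = k ! := by
    rw [mul_right_comm]
    exact_mod_cast Nat.choose_mul_factorial_mul_factorial hj
  rw [hkj, show (j : ℝ) + 1 + (k - j) = k + 1 by ring, show (j : ℝ) + a + (k - j) = k + a by ring,
    Gamma_nat_eq_factorial, Gamma_nat_eq_factorial] at hmono
  rw [← hkj, Gamma_nat_eq_factorial]
  have hjpos : (0 : ℝ) < j ! := by positivity
  refine le_of_mul_le_mul_right ?_ hjpos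
  calc (k.choose j : ℝ) * (k - j)! * Gamma ((j : ℝ) + a) * j !
      = k ! * Gamma ((j : ℝ) + a) := by rw [← hfac]; ring
    _ ≤ Gamma ((k : ℝ) + a) * j ! := hmono

lemma Real.sum_choose_mul_cos_sq_pow_mul_sin_sq_pow (k : ℕ) (θ : ℝ) :
    ∑ j ∈ range (k + 1), (k.choose j : ℝ) * cos θ ^ (2 * j) * sin θ ^ (2 * (k - j)) = 1 := by
  have h := add_pow (cos θ ^ 2) (sin θ ^ 2) k
  rw [cos_sq_add_sin_sq, one_pow] at h
  rw [h]
  refine sum_congr rfl fun j _ => ?_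
  rw [pow_mul, pow_mul]
  ring

theorem stmt1_general (k : ℕ) (θ : ℝ) :
    (∑ j ∈ Finset.range (k + 1),
        (k.choose j : ℝ) ^ 2 * Real.Gamma ((k : ℝ) - (j : ℝ) + 1) *
          Real.Gamma ((j : ℝ) + 3/2) * Real.cos θ ^ (2 * j) * Real.sin θ ^ (2 * (k - j)))
      ≤ Real.Gamma ((k : ℝ) + 3/2) ∧
    (θ = 0 →
      (∑ j ∈ Finset.range (k + 1),
          (k.choose j : ℝ) ^ 2 * Real.Gamma ((k : ℝ) - (j : ℝ) + 1) *
            Real.Gamma ((j : ℝ) + 3/2) * Real.cos θ ^ (2 * j) * Real.sin θ ^ (2 * (k - j)))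
        = Real.Gamma ((k : ℝ) + 3/2)) := by
  refine ⟨?_, ?_⟩
  · calc _ ≤ ∑ j ∈ range (k + 1), Gamma ((k : ℝ) + 3/2) *
            ((k.choose j : ℝ) * cos θ ^ (2 * j) * sin θ ^ (2 * (k - j))) := by
          refine sum_le_sum fun j hj => ?_
          have hterm := choose_mul_Gamma_mul_Gamma_le (Nat.lt_succ_iff.mp (mem_range.mp hj))
            (a := 3/2) (by norm_num)
          have htrig : 0 ≤ cos θ ^ (2 * j) * sin θ ^ (2 * (k - j)) := by
            rw [pow_mul, pow_mul]; positivity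
          calc _ = (k.choose j : ℝ) * (k.choose j * Gamma ((k : ℝ) - j + 1) * Gamma ((j : ℝ) + 3/2))
                * (cos θ ^ (2 * j) * sin θ ^ (2 * (k - j))) := by ring
            _ ≤ (k.choose j : ℝ) * Gamma ((k : ℝ) + 3/2) * (cos θ ^ (2 * j) * sin θ ^ (2 * (k - j))) := by
                gcongr
            _ = _ := by ring
      _ = Gamma ((k : ℝ) + 3/2) := by
          rw [← mul_sum, sum_choose_mul_cos_sq_pow_mul_sin_sq_pow, mul_one]
  · rintro rfl
    rw [sum_range_succ, sum_eq_zero fun j hj => ?_]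
    · simp
    · have : k - j ≠ 0 := by have := mem_range.mp hj; omega
      simp [this]

/-- For a fixed nonnegative integer `k` and any `θ ∈ [0, π/2]`,
`∑_{j=0}^{k} C(k,j)² Γ(k−j+1) Γ(j+3/2) cos^{2j}θ sin^{2k−2j}θ ≤ Γ(k+3/2)`,
with equality when `θ = 0`. -/
theorem stmt1 (k : ℕ) (θ : ℝ) (hθ : θ ∈ Set.Icc 0 (Real.pi / 2)) :
    (∑ j ∈ Finset.range (k + 1),
        (k.choose j : ℝ) ^ 2 * Real.Gamma ((k : ℝ) - (j : ℝ) + 1) *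
          Real.Gamma ((j : ℝ) + 3/2) * Real.cos θ ^ (2 * j) * Real.sin θ ^ (2 * (k - j)))
      ≤ Real.Gamma ((k : ℝ) + 3/2) ∧
    (θ = 0 →
      (∑ j ∈ Finset.range (k + 1),
          (k.choose j : ℝ) ^ 2 * Real.Gamma ((k : ℝ) - (j : ℝ) + 1) *
            Real.Gamma ((j : ℝ) + 3/2) * Real.cos θ ^ (2 * j) * Real.sin θ ^ (2 * (k - j)))
        = Real.Gamma ((k : ℝ) + 3/2)) :=
  stmt1_general k θ
end

section
/- For a fixed nonnegative integer k and reals ν₁, ν₂ with ν₁² + ν₂² = 1, ∑_{j=0}^{k} C(2k,2j) Γ(k−j+1) Γ(j+1/2) ν₁^{2k−2j} ν₂^{2j} ≤ k! · Γ(1/2). -/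
/-!
Writing `Γ(j + 1/2) = (2j)! Γ(1/2) / (4^j j!)`, the term-wise bound
`C(2k,2j) Γ(k-j+1) Γ(j+1/2) ≤ C(k,j) k! Γ(1/2)` becomes, after clearing factorials, the growth bound
`centralBinom k ≤ 4^j centralBinom (k-j)`, which follows from `centralBinom (n+1) ≤ 4 centralBinom n`.
Summing against the weights `x^(k-j) y^j` with `x = ν₁²`, `y = ν₂²`, the binomial theorem gives
`k! Γ(1/2) (ν₁² + ν₂²)^k = k! Γ(1/2)`.
-/

open Nat

theorem Real.Gamma_nat_add_half_mul (j : ℕ) :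
    Real.Gamma (j + 1 / 2) * (4 ^ j * j !) = (2 * j)! * Real.Gamma (1 / 2) := by
  induction j with
  | zero => simp
  | succ n ih =>
    have hΓ : Real.Gamma ((n + 1 : ℕ) + 1 / 2) = (n + 1 / 2) * Real.Gamma (n + 1 / 2) := by
      rw [← Real.Gamma_add_one (by positivity)]; push_cast; ring_nf
    rw [hΓ, show 2 * (n + 1) = 2 * n + 1 + 1 by ring, factorial_succ, factorial_succ,
      factorial_succ]
    push_cast
    linear_combination (4 * (n + 1 / 2 : ℝ) * (n + 1)) * ih

theorem Nat.centralBinom_succ_le (n : ℕ) : centralBinom (n + 1) ≤ 4 * centralBinom n := by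
  refine Nat.le_of_mul_le_mul_left ?_ n.succ_pos
  rw [succ_mul_centralBinom_succ]
  nlinarith

theorem Nat.centralBinom_add_le (m j : ℕ) : centralBinom (m + j) ≤ 4 ^ j * centralBinom m := by
  induction j with
  | zero => simp
  | succ j ih =>
    calc centralBinom (m + j + 1) ≤ 4 * centralBinom (m + j) := centralBinom_succ_le _
      _ ≤ 4 * (4 ^ j * centralBinom m) := by gcongr
      _ = 4 ^ (j + 1) * centralBinom m := by ring

theorem Nat.centralBinom_mul_factorial_mul_factorial (n : ℕ) :
    centralBinom n * n ! * n ! = (2 * n)! := by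
  rw [centralBinom, two_mul, add_choose_mul_factorial_mul_factorial]

theorem Nat.choose_two_mul_mul_factorial_le {j k : ℕ} (h : j ≤ k) :
    (2 * k).choose (2 * j) * (k - j)! * (2 * j)! ≤ 4 ^ j * j ! * k.choose j * k ! := by
  obtain ⟨m, rfl⟩ := Nat.exists_eq_add_of_le' h
  rw [Nat.add_sub_cancel]
  refine Nat.le_of_mul_le_mul_right (c := (2 * m)! * m !) ?_ (by positivity)
  calc (2 * (m + j)).choose (2 * j) * m ! * (2 * j)! * ((2 * m)! * m !)
      = (2 * m + 2 * j).choose (2 * j) * (2 * m)! * (2 * j)! * (m ! * m !) := by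
        rw [mul_add]; ring
    _ = centralBinom (m + j) * ((m + j)! * m !) ^ 2 := by
      rw [add_choose_mul_factorial_mul_factorial, ← mul_add,
        ← centralBinom_mul_factorial_mul_factorial]
      ring
    _ ≤ 4 ^ j * centralBinom m * ((m + j)! * m !) ^ 2 := by
      gcongr; exact centralBinom_add_le m j
    _ = 4 ^ j * (m + j)! * ((m + j).choose j * m ! * j !) * (centralBinom m * m ! * m !) := by
      rw [add_choose_mul_factorial_mul_factorial]; ring
    _ = 4 ^ j * j ! * (m + j).choose j * (m + j)! * ((2 * m)! * m !) := by
      rw [centralBinom_mul_factorial_mul_factorial]; ring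

theorem Real.choose_mul_Gamma_mul_Gamma_le_s8 {j k : ℕ} (h : j ≤ k) :
    ((2 * k).choose (2 * j) : ℝ) * Real.Gamma ((k : ℝ) - j + 1) * Real.Gamma (j + 1 / 2)
      ≤ k.choose j * k ! * Real.Gamma (1 / 2) := by
  have hΓk : Real.Gamma ((k : ℝ) - j + 1) = (k - j)! := by
    rw [← Nat.cast_sub h, Real.Gamma_nat_eq_factorial]
  have hnat : ((2 * k).choose (2 * j) * (k - j)! * (2 * j)! : ℝ)
      ≤ 4 ^ j * j ! * k.choose j * k ! := by
    exact_mod_cast Nat.choose_two_mul_mul_factorial_le h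
  have hΓ := Real.Gamma_nat_add_half_mul j
  have hΓ_half : 0 < Real.Gamma (1 / 2) := Real.Gamma_pos_of_pos one_half_pos
  rw [hΓk, ← mul_le_mul_iff_left₀ (by positivity : (0 : ℝ) < 4 ^ j * (j ! : ℝ))]
  calc ((2 * k).choose (2 * j) * (k - j)! * Real.Gamma (j + 1 / 2) * (4 ^ j * j !) : ℝ)
      = (2 * k).choose (2 * j) * (k - j)! * (2 * j)! * Real.Gamma (1 / 2) := by
        rw [mul_assoc _ (Real.Gamma _), hΓ]; ring
    _ ≤ 4 ^ j * j ! * k.choose j * k ! * Real.Gamma (1 / 2) := by gcongr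
    _ = k.choose j * k ! * Real.Gamma (1 / 2) * (4 ^ j * j !) := by ring

theorem Real.sum_choose_mul_Gamma_mul_Gamma_mul_pow_le (k : ℕ) {x y : ℝ} (hx : 0 ≤ x)
    (hy : 0 ≤ y) :
    ∑ j ∈ Finset.range (k + 1), ((2 * k).choose (2 * j) : ℝ) * Real.Gamma ((k : ℝ) - j + 1) *
        Real.Gamma (j + 1 / 2) * x ^ (k - j) * y ^ j
      ≤ k ! * Real.Gamma (1 / 2) * (x + y) ^ k := by
  rw [add_comm x y, add_pow, Finset.mul_sum]
  apply Finset.sum_le_sum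
  intro j hj
  have hjk : j ≤ k := Nat.lt_succ_iff.mp (Finset.mem_range.mp hj)
  calc ((2 * k).choose (2 * j) : ℝ) * Real.Gamma ((k : ℝ) - j + 1) * Real.Gamma (j + 1 / 2) *
        x ^ (k - j) * y ^ j
      = ((2 * k).choose (2 * j) : ℝ) * Real.Gamma ((k : ℝ) - j + 1) * Real.Gamma (j + 1 / 2) *
        (x ^ (k - j) * y ^ j) := by ring
    _ ≤ k.choose j * k ! * Real.Gamma (1 / 2) * (x ^ (k - j) * y ^ j) :=
      mul_le_mul_of_nonneg_right (Real.choose_mul_Gamma_mul_Gamma_le_s8 hjk) (by positivity)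
    _ = k ! * Real.Gamma (1 / 2) * (y ^ j * x ^ (k - j) * k.choose j) := by ring

/-- For a fixed nonnegative integer `k` and reals `ν₁, ν₂` with `ν₁² + ν₂² = 1`,
`∑_{j=0}^{k} C(2k,2j) Γ(k−j+1) Γ(j+1/2) ν₁^{2k−2j} ν₂^{2j} ≤ k! · Γ(1/2)`. -/
theorem stmt8 (k : ℕ) (ν₁ ν₂ : ℝ) (hν : ν₁ ^ 2 + ν₂ ^ 2 = 1) :
    (∑ j ∈ Finset.range (k + 1),
        ((2 * k).choose (2 * j) : ℝ) * Real.Gamma ((k : ℝ) - (j : ℝ) + 1) *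
          Real.Gamma ((j : ℝ) + 1/2) * ν₁ ^ (2 * (k - j)) * ν₂ ^ (2 * j))
      ≤ (k.factorial : ℝ) * Real.Gamma (1/2) := by
  simpa only [pow_mul, hν, one_pow, mul_one] using
    Real.sum_choose_mul_Gamma_mul_Gamma_mul_pow_le k (sq_nonneg ν₁) (sq_nonneg ν₂)
end

section
/- For 0 ≤ α ≤ 2n+3 (n ≥ 1 integer) and all r ∈ [0,1), (1−r²)^α ∑_{k=0}^∞ C(α+k−1,k)² [Γ(k+3/2)/Γ(k+n+α+3/2)] r^{2k} ≤ Γ(3/2)/Γ(n+α+3/2), with equality at r = 0. -/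
/-!
The coefficient `C(α+k−1,k)` is `Ring.multichoose α k`, so `∑ C(α+k−1,k) x^k = (1−x)^{−α}` is the
binomial series. The ratio of consecutive terms of `u k = C(α+k−1,k) Γ(k+3/2) / Γ(k+n+α+3/2)` is
`(α+k)(k+3/2) / ((k+1)(k+n+α+3/2))`, which is at most `1` for every `k` because `α ≤ 2n+3`; hence
`u k ≤ u 0 = Γ(3/2)/Γ(n+α+3/2)`. Bounding one factor `C(α+k−1,k)` of each term by this leaves
`Γ(3/2)/Γ(n+α+3/2) · ∑ C(α+k−1,k) r^{2k} = Γ(3/2)/Γ(n+α+3/2) · (1−r²)^{−α}`.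
-/

open Polynomial
open scoped Nat

namespace Ring

variable {K : Type*} [Field K] [CharZero K]

theorem factorial_mul_multichoose (a : K) (k : ℕ) :
    (k ! : K) * multichoose a k = (ascPochhammer K k).eval a := by
  rw [← nsmul_eq_mul, factorial_nsmul_multichoose_eq_ascPochhammer, ascPochhammer_smeval_eq_eval]

theorem succ_mul_multichoose_succ (a : K) (k : ℕ) :
    ((k : K) + 1) * multichoose a (k + 1) = (a + k) * multichoose a k := by
  have h := factorial_mul_multichoose a (k + 1)
  rw [ascPochhammer_succ_eval, ← factorial_mul_multichoose, Nat.factorial_succ] at h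
  apply mul_left_cancel₀ (Nat.cast_ne_zero.2 k.factorial_ne_zero : (k ! : K) ≠ 0)
  push_cast at h
  linear_combination h

end Ring

theorem Ring.multichoose_nonneg {a : ℝ} (ha : 0 ≤ a) (k : ℕ) : 0 ≤ multichoose a k := by
  induction k with
  | zero => simp
  | succ k ih =>
    have h := succ_mul_multichoose_succ a k
    have hpos : (0 : ℝ) < k + 1 := by positivity
    exact (mul_nonneg_iff_of_pos_left hpos).1 (h ▸ by positivity)

theorem Real.Gamma_add_nat_eq_ascPochhammer_mul {s : ℝ} (hs : 0 < s) (k : ℕ) :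
    Real.Gamma (s + k) = (ascPochhammer ℝ k).eval s * Real.Gamma s := by
  induction k with
  | zero => simp
  | succ k ih =>
    rw [Nat.cast_succ, ← add_assoc, Real.Gamma_add_one (by positivity), ih,
      ascPochhammer_succ_eval]
    ring

theorem Real.Gamma_natCast_succ_add {s : ℝ} (hs : 0 < s) (k : ℕ) :
    Real.Gamma ((k + 1 : ℕ) + s) = (k + s) * Real.Gamma (k + s) := by
  rw [Nat.cast_succ, add_right_comm, Real.Gamma_add_one (by positivity)]

theorem Ring.multichoose_eq_Gamma_div {a : ℝ} (ha : 0 ≤ a) (k : ℕ) :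
    multichoose a k =
      if k = 0 then 1 else Real.Gamma (a + k) / (Real.Gamma a * k !) := by
  rcases Nat.eq_zero_or_pos k with rfl | hk
  · simp
  rw [if_neg hk.ne']
  rcases ha.eq_or_lt with rfl | ha
  · -- both sides vanish: `Γ 0 = 0` and division by zero gives zero
    obtain ⟨k, rfl⟩ := Nat.exists_eq_add_of_lt hk
    simp
  rw [Real.Gamma_add_nat_eq_ascPochhammer_mul ha, ← factorial_mul_multichoose]
  have := Real.Gamma_pos_of_pos ha
  field_simp

theorem Real.hasSum_multichoose_mul_pow (a : ℝ) {x : ℝ} (hx : |x| < 1) :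
    HasSum (fun k ↦ Ring.multichoose a k * x ^ k) ((1 - x) ^ a)⁻¹ := by
  have h := (Real.one_div_one_sub_rpow_hasFPowerSeriesOnBall_zero a).hasSum (y := x)
    (by simpa [enorm_eq_nnnorm, ← NNReal.coe_lt_coe] using hx)
  simpa [FormalMultilinearSeries.ofScalars_apply_eq, Ring.multichoose_eq, mul_comm] using h

theorem Ring.multichoose_mul_Gamma_div_Gamma_le {a b c : ℝ} (ha : 0 ≤ a) (hb : 0 < b)
    (hc : 0 < c) (h : ∀ k : ℕ, (a + k) * (k + b) ≤ (k + 1) * (k + c)) (k : ℕ) :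
    multichoose a k * (Real.Gamma (k + b) / Real.Gamma (k + c)) ≤
      Real.Gamma b / Real.Gamma c := by
  set u : ℕ → ℝ := fun k ↦ multichoose a k * (Real.Gamma (k + b) / Real.Gamma (k + c))
  suffices Antitone u by simpa [u] using this k.zero_le
  refine antitone_nat_of_succ_le fun k ↦ ?_
  have hu : 0 ≤ u k := mul_nonneg (multichoose_nonneg ha k) (by positivity)
  have hcΓ : 0 < Real.Gamma (k + c) := Real.Gamma_pos_of_pos (by positivity)
  have hrec := succ_mul_multichoose_succ a k
  have hstep : u (k + 1) = (a + k) * (k + b) / ((k + 1) * (k + c)) * u k := by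
    simp only [u, Real.Gamma_natCast_succ_add hb, Real.Gamma_natCast_succ_add hc]
    field_simp
    linear_combination hrec
  rw [hstep]
  exact mul_le_of_le_one_left hu (div_le_one_of_le₀ (h k) (by positivity))

theorem stmt16_general (n : ℕ) (α : ℝ) (h0 : 0 ≤ α) (h1 : α ≤ 2 * n + 3)
    (c : ℕ → ℝ)
    (hc : ∀ k : ℕ, c k =
      if k = 0 then 1 else Real.Gamma (α + k) / (Real.Gamma α * k.factorial))
    (r : ℝ) (hr : r ∈ Set.Ico (0 : ℝ) 1) :
    ((1 - r ^ 2) ^ α *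
        ∑' k : ℕ, (c k) ^ 2 * (Real.Gamma ((k : ℝ) + 3/2) /
          Real.Gamma ((k : ℝ) + n + α + 3/2)) * r ^ (2 * k))
      ≤ Real.Gamma (3/2) / Real.Gamma ((n : ℝ) + α + 3/2) ∧
    (r = 0 →
      ((1 - r ^ 2) ^ α *
          ∑' k : ℕ, (c k) ^ 2 * (Real.Gamma ((k : ℝ) + 3/2) /
            Real.Gamma ((k : ℝ) + n + α + 3/2)) * r ^ (2 * k))
        = Real.Gamma (3/2) / Real.Gamma ((n : ℝ) + α + 3/2)) := by
  obtain rfl : c = Ring.multichoose α :=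
    funext fun k ↦ (hc k).trans (Ring.multichoose_eq_Gamma_div h0 k).symm
  set K := Real.Gamma (3/2) / Real.Gamma ((n : ℝ) + α + 3/2)
  have hterm (k : ℕ) : Ring.multichoose α k ^ 2 * (Real.Gamma ((k : ℝ) + 3/2) /
      Real.Gamma ((k : ℝ) + n + α + 3/2)) * r ^ (2 * k) ≤
        K * (Ring.multichoose α k * (r ^ 2) ^ k) := by
    have hratio := Ring.multichoose_mul_Gamma_div_Gamma_le h0 (b := 3/2) (c := n + α + 3/2)
      (by norm_num) (by positivity) (fun k ↦ by nlinarith [k.cast_nonneg (α := ℝ)]) k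
    rw [← add_assoc, ← add_assoc] at hratio
    have hm : 0 ≤ Ring.multichoose α k * (r ^ 2) ^ k :=
      mul_nonneg (Ring.multichoose_nonneg h0 k) (by positivity)
    calc _ = Ring.multichoose α k * (r ^ 2) ^ k * (Ring.multichoose α k *
          (Real.Gamma ((k : ℝ) + 3/2) / Real.Gamma ((k : ℝ) + n + α + 3/2))) := by ring
      _ ≤ Ring.multichoose α k * (r ^ 2) ^ k * K := mul_le_mul_of_nonneg_left hratio hm
      _ = _ := by ring
  have hr2 : |r ^ 2| < 1 := by rw [abs_of_nonneg (by positivity)]; nlinarith [hr.1, hr.2]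
  have hdom := (Real.hasSum_multichoose_mul_pow α hr2).mul_left K
  have hsum := Summable.of_nonneg_of_le
    (fun k ↦ mul_nonneg (mul_nonneg (sq_nonneg _) (by positivity)) (pow_nonneg hr.1 _))
    hterm hdom.summable
  have hpos : 0 < (1 - r ^ 2) ^ α := Real.rpow_pos_of_pos (by linarith [abs_lt.1 hr2]) α
  refine ⟨?_, fun hr0 ↦ ?_⟩
  · calc _ ≤ (1 - r ^ 2) ^ α * (K * ((1 - r ^ 2) ^ α)⁻¹) :=
          mul_le_mul_of_nonneg_left (hasSum_le hterm hsum.hasSum hdom) hpos.le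
      _ = K := by field_simp
  · subst hr0
    rw [tsum_eq_single 0 fun k hk ↦ by simp [hk]]
    simp [K]

/-- For `0 ≤ α ≤ 2n+3` (`n ≥ 1` an integer) and all `r ∈ [0,1)`,
`(1−r²)^α ∑_{k=0}^∞ C(α+k−1,k)² [Γ(k+3/2)/Γ(k+n+α+3/2)] r^{2k}
  ≤ Γ(3/2)/Γ(n+α+3/2)`, with equality at `r = 0`.
Here `C(α+k−1,k) = Γ(α+k)/(Γ(α)k!)`, equal to `1` for `k = 0`. -/
theorem stmt16 (n : ℕ) (hn : 1 ≤ n) (α : ℝ) (h0 : 0 ≤ α) (h1 : α ≤ 2 * n + 3)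
    (c : ℕ → ℝ)
    (hc : ∀ k : ℕ, c k =
      if k = 0 then 1 else Real.Gamma (α + k) / (Real.Gamma α * k.factorial))
    (r : ℝ) (hr : r ∈ Set.Ico (0 : ℝ) 1) :
    ((1 - r ^ 2) ^ α *
        ∑' k : ℕ, (c k) ^ 2 * (Real.Gamma ((k : ℝ) + 3/2) /
          Real.Gamma ((k : ℝ) + n + α + 3/2)) * r ^ (2 * k))
      ≤ Real.Gamma (3/2) / Real.Gamma ((n : ℝ) + α + 3/2) ∧
    (r = 0 →
      ((1 - r ^ 2) ^ α *
          ∑' k : ℕ, (c k) ^ 2 * (Real.Gamma ((k : ℝ) + 3/2) /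
            Real.Gamma ((k : ℝ) + n + α + 3/2)) * r ^ (2 * k))
        = Real.Gamma (3/2) / Real.Gamma ((n : ℝ) + α + 3/2)) :=
  stmt16_general n α h0 h1 c hc r hr
end
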